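/- arXiv:2103.09953 — 7 statements merged into one kernel-verified Lean document; each statement's English description precedes it below -/
import Mathlib

section
/- Let q : ℝ → ℂ, let λ ∈ {-1, 1}, set r(x) = λ · conj(q(x)), let σ ∈ ℂ satisfy σ² = λ, and let k ∈ ℂ. Set T = [[0, σ⁻¹], [σ, 0]] (a 2×2 complex matrix, which satisfies T = T⁻¹). If μ : ℝ → Matrix (Fin 2) (Fin 2) ℂ is differentiable and satisfies μ'(x) = [[-i·conj(k), q(x)], [r(x), i·conj(k)]] · μ(x) for all x ∈ ℝ, then the function μ̌(x) := T · conj(μ(x)) · T (entrywise complex conjugate) is differentiable and satisfies μ̌'(x) = [[-i·k, q(x)], [r(x), i·k]] · μ̌(x) for all x ∈ ℝ. -/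
open Complex Matrix ComplexConjugate

/-!
Conjugating the coefficient matrix with spectral parameter `conj k` entrywise gives
`[[i k, conj q], [conj r, -i k]]`. Sandwiching between copies of the involution
`T = [[0, σ⁻¹], [σ, 0]]` maps `[[a, b], [c, d]]` to `[[d, c / σ²], [σ² b, a]]`; as `σ² = λ` is
real and nonzero and `r = λ conj q`, this gives back `[[-i k, q], [r, i k]]`. Inserting `T T = 1`
between the conjugated coefficient matrix and `conj μ` in `T conj(μ') T` then shows that
`T conj(μ) T` solves the system with parameter `k`.
-/

def HasEntrywiseDerivAt {𝕜 𝔸 m n : Type*} [NontriviallyNormedField 𝕜] [NormedAddCommGroup 𝔸]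
    [NormedSpace 𝕜 𝔸] (μ : 𝕜 → Matrix m n 𝔸) (μ' : Matrix m n 𝔸) (x : 𝕜) : Prop :=
  ∀ i j, HasDerivAt (fun y => μ y i j) (μ' i j) x

namespace HasEntrywiseDerivAt

section Algebra

variable {𝕜 𝔸 l m n o : Type*} [NontriviallyNormedField 𝕜] [NormedRing 𝔸] [NormedAlgebra 𝕜 𝔸]
  {μ : 𝕜 → Matrix m n 𝔸} {μ' : Matrix m n 𝔸} {x : 𝕜}

theorem const_mul [Fintype m] (h : HasEntrywiseDerivAt μ μ' x) (P : Matrix l m 𝔸) :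
    HasEntrywiseDerivAt (fun y => P * μ y) (P * μ') x := fun i j => by
  simpa only [mul_apply] using HasDerivAt.fun_sum fun a _ => (h a j).const_mul (P i a)

theorem mul_const [Fintype n] (h : HasEntrywiseDerivAt μ μ' x) (Q : Matrix n o 𝔸) :
    HasEntrywiseDerivAt (fun y => μ y * Q) (μ' * Q) x := fun i j => by
  simpa only [mul_apply] using HasDerivAt.fun_sum fun b _ => (h i b).mul_const (Q b j)

end Algebra

theorem map_conj {𝕜 m n : Type*} [RCLike 𝕜] {μ : ℝ → Matrix m n 𝕜} {μ' : Matrix m n 𝕜} {x : ℝ}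
    (h : HasEntrywiseDerivAt μ μ' x) :
    HasEntrywiseDerivAt (fun y => (μ y).map (starRingEnd 𝕜)) (μ'.map (starRingEnd 𝕜)) x :=
  fun i j => (h i j).star

end HasEntrywiseDerivAt

theorem mul_mul_mul_of_mul_self_eq_one {M : Type*} [Monoid M] {t : M} (ht : t * t = 1) (a b : M) :
    t * (a * b) * t = t * a * t * (t * b * t) := by
  rw [show t * a * t * (t * b * t) = t * a * (t * t) * b * t by simp only [mul_assoc], ht, mul_one]
  simp only [mul_assoc]

theorem map_fin_two {α β : Type*} (f : α → β) (a b c d : α) :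
    (!![a, b; c, d]).map f = !![f a, f b; f c, f d] := by
  ext i j
  fin_cases i <;> fin_cases j <;> rfl

theorem antidiag_inv_mul_self {K : Type*} [Field K] {s : K} (hs : s ≠ 0) :
    !![0, s⁻¹; s, 0] * !![0, s⁻¹; s, 0] = 1 := by
  simp [hs, one_fin_two]

theorem antidiag_inv_mul_mul_antidiag_inv {K : Type*} [Field K] {s : K} (hs : s ≠ 0)
    (a b c d : K) :
    !![0, s⁻¹; s, 0] * !![a, b; c, d] * !![0, s⁻¹; s, 0] = !![d, c / s ^ 2; s ^ 2 * b, a] := by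
  simp [field]

theorem antidiag_inv_mul_conj_akns_mul_antidiag_inv {σ lam : ℂ} (hσ0 : σ ≠ 0) (hσ : σ ^ 2 = lam)
    (hlam : conj lam = lam) (q k : ℂ) :
    !![0, σ⁻¹; σ, 0] * (!![-I * conj k, q; lam * conj q, I * conj k]).map conj * !![0, σ⁻¹; σ, 0]
      = !![-I * k, q; lam * conj q, I * k] := by
  rw [map_fin_two, antidiag_inv_mul_mul_antidiag_inv hσ0, hσ]
  simp [hlam, mul_div_cancel_left₀ _ (hσ ▸ pow_ne_zero 2 hσ0 : lam ≠ 0)]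

/-- Symmetry lemma for the AKNS system when `r = λ · conj q`:
if `μ` solves the system with spectral parameter `conj k`, then
`μ̌(x) = T · conj(μ(x)) · T` (entrywise conjugate) solves it with parameter `k`. -/
theorem akns_conjugation_symmetry
    (q : ℝ → ℂ) (lam : ℂ) (hlam : lam = -1 ∨ lam = 1)
    (r : ℝ → ℂ) (hr : ∀ x, r x = lam * (starRingEnd ℂ) (q x))
    (σ : ℂ) (hσ : σ ^ 2 = lam) (k : ℂ)
    (μ : ℝ → Matrix (Fin 2) (Fin 2) ℂ)
    (hμ : ∀ x i j, HasDerivAt (fun y => μ y i j)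
      ((!![-Complex.I * (starRingEnd ℂ) k, q x;
           r x, Complex.I * (starRingEnd ℂ) k] * μ x) i j) x) :
    ∀ x i j, HasDerivAt
      (fun y => (!![0, σ⁻¹; σ, 0] * (μ y).map (starRingEnd ℂ) * !![0, σ⁻¹; σ, 0]) i j)
      ((!![-Complex.I * k, q x; r x, Complex.I * k] *
        (!![0, σ⁻¹; σ, 0] * (μ x).map (starRingEnd ℂ) * !![0, σ⁻¹; σ, 0])) i j) x := by
  simp only [hr] at hμ ⊢
  intro x
  have hσ0 : σ ≠ 0 := by rintro rfl; rcases hlam with rfl | rfl <;> norm_num at hσ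
  have hlam_conj : conj lam = lam := by rcases hlam with rfl | rfl <;> simp
  have hderiv := ((HasEntrywiseDerivAt.map_conj (hμ x)).const_mul !![0, σ⁻¹; σ, 0]).mul_const
    !![0, σ⁻¹; σ, 0]
  rwa [Matrix.map_mul, mul_mul_mul_of_mul_self_eq_one (antidiag_inv_mul_self hσ0),
    antidiag_inv_mul_conj_akns_mul_antidiag_inv hσ0 hσ hlam_conj] at hderiv
end

section
/- Let q : ℝ → ℂ, λ ∈ {-1, 1}, r(x) = λ · conj(q(x)), and let k ∈ ℝ. Suppose μ : ℝ → Matrix (Fin 2) (Fin 2) ℂ is differentiable, satisfies the AKNS system μ'(x) = [[-i k, q(x)], [r(x), i k]] · μ(x) for all x, and satisfies the normalization lim_{x → -∞} μ(x) · E_k(x) = I (entrywise limit), where E_k(x) = diag(e^{i k x}, e^{-i k x}). Suppose further that the limit S := lim_{x → +∞} E_k(x) · μ(x) exists (entrywise), and assume uniqueness of the normalized solution: any two differentiable solutions ν of this system with lim_{x → -∞} ν(x) · E_k(x) = I are equal. Then the entries of S satisfy S₂₂ = conj(S₁₁) and S₁₂ = λ · conj(S₂₁). -/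
open Complex Matrix Filter Topology

/-!
Let `σ = !![0, 1; λ, 0]`, so `σ² = λ` and `σ⁻¹ = σᵀ`. The map `Φ M = σ M̄ σ⁻¹` is an ℝ-algebra
endomorphism of the 2 × 2 complex matrices which, for `λ = ±1`, `r = λ q̄` and real `k`, fixes the
coefficient matrix of the AKNS system and `E_k(x)`. Hence `Φ ∘ μ` solves the same system with the
same normalization at `-∞`, so by uniqueness `Φ ∘ μ = μ`. Passing to the limit at `+∞` gives
`Φ S = S`, which entrywise is the claimed symmetry.
-/

section
attribute [local instance] Matrix.normedAddCommGroup Matrix.normedSpace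

theorem Matrix.hasDerivAt_entry_clm_comp {m n m' n' F : Type*} [Fintype m] [Fintype n]
    [Fintype m'] [Fintype n'] [NormedAddCommGroup F] [NormedSpace ℝ F]
    (L : Matrix m n F →L[ℝ] Matrix m' n' F) {μ : ℝ → Matrix m n F} {μ' : Matrix m n F} {x : ℝ}
    (h : ∀ i j, HasDerivAt (fun y => μ y i j) (μ' i j) x) (i : m') (j : n') :
    HasDerivAt (fun y => L (μ y) i j) (L μ' i j) x := by
  have hμ : HasDerivAt μ μ' x := hasDerivAt_pi.2 fun i => hasDerivAt_pi.2 (h i)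
  exact hasDerivAt_pi.1 (hasDerivAt_pi.1 (L.hasFDerivAt.comp_hasDerivAt x hμ) i) j

end

theorem Matrix.tendsto_nhds_iff {X m n α : Type*} [TopologicalSpace α] {l : Filter X}
    {f : X → Matrix m n α} {M : Matrix m n α} :
    Tendsto f l (𝓝 M) ↔ ∀ i j, Tendsto (fun x => f x i j) l (𝓝 (M i j)) :=
  tendsto_pi_nhds.trans (forall_congr' fun _ => tendsto_pi_nhds)

theorem AlgHom.map_solution_eq_self_of_unique {n : Type*} [Fintype n] [DecidableEq n]
    (Φ : Matrix n n ℂ →ₐ[ℝ] Matrix n n ℂ) (A E : ℝ → Matrix n n ℂ)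
    (hA : ∀ x, Φ (A x) = A x) (hE : ∀ x, Φ (E x) = E x) (μ : ℝ → Matrix n n ℂ)
    (hode : ∀ x i j, HasDerivAt (fun y => μ y i j) ((A x * μ x) i j) x)
    (hnorm : ∀ i j, Tendsto (fun x => (μ x * E x) i j) atBot (𝓝 ((1 : Matrix n n ℂ) i j)))
    (huniq : ∀ ν : ℝ → Matrix n n ℂ,
      (∀ x i j, HasDerivAt (fun y => ν y i j) ((A x * ν x) i j) x) →
      (∀ i j, Tendsto (fun x => (ν x * E x) i j) atBot (𝓝 ((1 : Matrix n n ℂ) i j))) → ν = μ) :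
    ∀ x, Φ (μ x) = μ x := by
  have hΦ : Continuous Φ := Φ.toLinearMap.continuous_of_finiteDimensional
  refine congrFun (huniq _ ?_ ?_)
  · intro x i j
    simpa only [LinearMap.coe_toContinuousLinearMap', AlgHom.toLinearMap_apply, map_mul, hA] using
      Matrix.hasDerivAt_entry_clm_comp Φ.toLinearMap.toContinuousLinearMap (hode x) i j
  · have hlim := (hΦ.tendsto 1).comp (Matrix.tendsto_nhds_iff.2 hnorm)
    simp only [Function.comp_def, map_mul, hE, map_one] at hlim
    exact Matrix.tendsto_nhds_iff.1 hlim

noncomputable section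

def aknsMatrix (q r : ℝ → ℂ) (k x : ℝ) : Matrix (Fin 2) (Fin 2) ℂ :=
  !![-Complex.I * (k : ℂ), q x; r x, Complex.I * (k : ℂ)]

def expDiag (k x : ℝ) : Matrix (Fin 2) (Fin 2) ℂ :=
  !![Complex.exp (Complex.I * k * x), 0; 0, Complex.exp (-(Complex.I * k * x))]

def aknsConj (lam : ℂ) (hlam : lam * lam = 1) :
    Matrix (Fin 2) (Fin 2) ℂ →ₐ[ℝ] Matrix (Fin 2) (Fin 2) ℂ where
  toFun M := !![0, 1; lam, 0] * M.map (starRingEnd ℂ) * !![0, 1; lam, 0]ᵀ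
  map_one' := by
    ext i j; fin_cases i <;> fin_cases j <;> simp [Matrix.mul_apply, Fin.sum_univ_two, hlam]
  map_mul' A B := by
    have hσ : !![0, 1; lam, 0]ᵀ * !![0, 1; lam, 0] = (1 : Matrix (Fin 2) (Fin 2) ℂ) := by
      ext i j; fin_cases i <;> fin_cases j <;> simp [Matrix.mul_apply, Fin.sum_univ_two, hlam]
    simp only [Matrix.map_mul, Matrix.mul_assoc]
    rw [← Matrix.mul_assoc _ !![0, 1; lam, 0], hσ, Matrix.one_mul]
  map_zero' := by simp
  map_add' A B := by rw [Matrix.map_add _ (map_add _), Matrix.mul_add, Matrix.add_mul]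
  commutes' r := by
    ext i j; fin_cases i <;> fin_cases j <;>
      simp [Matrix.mul_apply, Fin.sum_univ_two, Matrix.algebraMap_eq_diagonal]
    linear_combination (r : ℂ) * hlam

section
variable {lam : ℂ} (hlam : lam * lam = 1)

theorem aknsConj_apply (M : Matrix (Fin 2) (Fin 2) ℂ) :
    aknsConj lam hlam M = !![starRingEnd ℂ (M 1 1), lam * starRingEnd ℂ (M 1 0);
      lam * starRingEnd ℂ (M 0 1), starRingEnd ℂ (M 0 0)] := by
  ext i j; fin_cases i <;> fin_cases j <;>
    simp [aknsConj, Matrix.mul_apply, Fin.sum_univ_two, -cons_vecMul, -Matrix.cons_mul,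
      mul_comm _ lam, ← mul_assoc, hlam]

theorem aknsConj_aknsMatrix {q r : ℝ → ℂ} (hr : ∀ x, r x = lam * starRingEnd ℂ (q x))
    (k x : ℝ) : aknsConj lam hlam (aknsMatrix q r k x) = aknsMatrix q r k x := by
  rcases mul_self_eq_one_iff.1 hlam with rfl | rfl <;>
    simp [aknsConj_apply, aknsMatrix, hr]

theorem aknsConj_expDiag (k x : ℝ) : aknsConj lam hlam (expDiag k x) = expDiag k x := by
  simp [aknsConj_apply, expDiag, ← Complex.exp_conj]

end

end

/-- Symmetry of the scattering matrix for the AKNS system with `r = λ · conj q`, `λ = ±1`,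
and real spectral parameter `k`: writing `S = [[a, B], [b, A]]`, one has
`A = conj a` and `B = λ · conj b`, i.e. `S₂₂ = conj S₁₁` and `S₁₂ = λ · conj S₂₁`. -/
theorem akns_scattering_matrix_symmetry
    (q : ℝ → ℂ) (lam : ℂ) (hlam : lam = -1 ∨ lam = 1)
    (r : ℝ → ℂ) (hr : ∀ x, r x = lam * (starRingEnd ℂ) (q x)) (k : ℝ)
    (μ : ℝ → Matrix (Fin 2) (Fin 2) ℂ) (S : Matrix (Fin 2) (Fin 2) ℂ)
    (hode : ∀ x i j, HasDerivAt (fun y => μ y i j)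
      ((!![-Complex.I * (k : ℂ), q x; r x, Complex.I * (k : ℂ)] * μ x) i j) x)
    (hnorm : ∀ i j, Tendsto (fun x : ℝ =>
      (μ x * !![Complex.exp (Complex.I * k * x), 0;
                0, Complex.exp (-(Complex.I * k * x))]) i j)
      atBot (𝓝 ((1 : Matrix (Fin 2) (Fin 2) ℂ) i j)))
    (hS : ∀ i j, Tendsto (fun x : ℝ =>
      (!![Complex.exp (Complex.I * k * x), 0;
          0, Complex.exp (-(Complex.I * k * x))] * μ x) i j)
      atTop (𝓝 (S i j)))
    (huniq : ∀ ν : ℝ → Matrix (Fin 2) (Fin 2) ℂ,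
      (∀ x i j, HasDerivAt (fun y => ν y i j)
        ((!![-Complex.I * (k : ℂ), q x; r x, Complex.I * (k : ℂ)] * ν x) i j) x) →
      (∀ i j, Tendsto (fun x : ℝ =>
        (ν x * !![Complex.exp (Complex.I * k * x), 0;
                  0, Complex.exp (-(Complex.I * k * x))]) i j)
        atBot (𝓝 ((1 : Matrix (Fin 2) (Fin 2) ℂ) i j))) → ν = μ) :
    S 1 1 = (starRingEnd ℂ) (S 0 0) ∧ S 0 1 = lam * (starRingEnd ℂ) (S 1 0) := by
  have hlam2 : lam * lam = 1 := by rcases hlam with rfl | rfl <;> norm_num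
  let Φ := aknsConj lam hlam2
  have hμ : ∀ x, Φ (μ x) = μ x :=
    Φ.map_solution_eq_self_of_unique (aknsMatrix q r k) (expDiag k)
      (aknsConj_aknsMatrix hlam2 hr k) (aknsConj_expDiag hlam2 k) μ hode hnorm huniq
  have hlim : Tendsto (fun x => expDiag k x * μ x) atTop (𝓝 S) := Matrix.tendsto_nhds_iff.2 hS
  have hΦlim : Tendsto (fun x => expDiag k x * μ x) atTop (𝓝 (Φ S)) := by
    have := (Φ.toLinearMap.continuous_of_finiteDimensional.tendsto S).comp hlim
    simpa only [Function.comp_def, AlgHom.toLinearMap_apply, map_mul, Φ, aknsConj_expDiag, hμ]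
      using this
  have hΦS := aknsConj_apply hlam2 S ▸ tendsto_nhds_unique hΦlim hlim
  refine ⟨?_, (congrFun₂ hΦS 0 1).symm⟩
  simpa using congrArg (starRingEnd ℂ) (congrFun₂ hΦS 0 0)
end

section
/- Let q, r : ℝ → ℂ, k ∈ ℂ, and J = [[0, -1], [1, 0]]. If μ : ℝ → Matrix (Fin 2) (Fin 2) ℂ is differentiable and satisfies the AKNS system μ'(x) = [[-i k, q(x)], [r(x), i k]] · μ(x) for all x ∈ ℝ, then the function μ̌(x) := J · μ(-x) · J⁻¹ is differentiable and satisfies μ̌'(x) = [[-i k, r(-x)], [q(-x), i k]] · μ̌(x) for all x ∈ ℝ, i.e., μ̌ solves the AKNS system with the same spectral parameter k and with potentials x ↦ r(-x) and x ↦ q(-x). Moreover, if k ∈ ℝ and lim_{x → +∞} μ(x) · E_k(x) = I (entrywise), then lim_{x → -∞} μ̌(x) · E_k(x) = I, where E_k(x) = diag(e^{i k x}, e^{-i k x}). -/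
/-!
Conjugation by `J = !![0, -1; 1, 0]` swaps the diagonal entries of a `2 × 2` matrix and swaps and
negates the off-diagonal ones. Hence it sends the AKNS matrix `U(q, r)` to `-U(r, q)` and the phase
`E_k(x)` to `E_k(-x)`. The reflection `x ↦ -x` contributes a second sign to the derivative, which
cancels the first, and exchanges the limit at `+∞` for the one at `-∞`.
-/

open Complex Matrix Filter Topology

theorem HasDerivAt.comp_neg {𝕜 F : Type*} [NontriviallyNormedField 𝕜] [NormedAddCommGroup F]
    [NormedSpace 𝕜 F] {f : 𝕜 → F} {f' : F} {x : 𝕜} (hf : HasDerivAt f f' (-x)) :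
    HasDerivAt (fun y => f (-y)) (-f') x := by
  simpa [Function.comp_def] using hf.scomp x (hasDerivAt_neg x)

theorem tendsto_matrix_nhds {α R m n : Type*} [TopologicalSpace R] {l : Filter α}
    {f : α → Matrix m n R} {M : Matrix m n R} :
    Tendsto f l (𝓝 M) ↔ ∀ i j, Tendsto (fun x => f x i j) l (𝓝 (M i j)) :=
  tendsto_pi_nhds.trans (forall_congr' fun _ => tendsto_pi_nhds)

theorem hasDerivAt_matrix_mul_mul_apply {𝕜 R l m n o : Type*} [NontriviallyNormedField 𝕜]
    [NormedRing R] [NormedAlgebra 𝕜 R] [Fintype m] [Fintype n]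
    {f : 𝕜 → Matrix m n R} {f' : Matrix m n R} {x : 𝕜} (A : Matrix l m R) (B : Matrix n o R)
    (hf : ∀ i j, HasDerivAt (fun y => f y i j) (f' i j) x) (i : l) (j : o) :
    HasDerivAt (fun y => (A * f y * B) i j) ((A * f' * B) i j) x := by
  simp only [mul_apply]
  exact HasDerivAt.fun_sum fun b _ =>
    (HasDerivAt.fun_sum fun a _ => (hf a b).const_mul _).mul_const _

local notation "𝕁" => (!![0, -1; 1, 0] : Matrix (Fin 2) (Fin 2) ℂ)

theorem J_mul_J : 𝕁 * 𝕁 = -1 := by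
  ext i j
  fin_cases i <;> fin_cases j <;> simp

theorem inv_J : 𝕁⁻¹ = -𝕁 :=
  inv_eq_right_inv (by rw [Matrix.mul_neg, J_mul_J, neg_neg])

theorem inv_J_mul_J_mul {n : Type*} (A : Matrix (Fin 2) n ℂ) : 𝕁⁻¹ * (𝕁 * A) = A := by
  rw [← Matrix.mul_assoc, inv_J, Matrix.neg_mul, J_mul_J, neg_neg, Matrix.one_mul]

theorem J_mul_aknsMatrix_mul_inv_J (k q r : ℂ) :
    𝕁 * !![-I * k, q; r, I * k] * 𝕁⁻¹ = -!![-I * k, r; q, I * k] := by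
  rw [inv_J]
  ext i j
  fin_cases i <;> fin_cases j <;> simp

theorem inv_J_mul_diagonal (a b : ℂ) : 𝕁⁻¹ * !![a, 0; 0, b] = !![b, 0; 0, a] * 𝕁⁻¹ := by
  rw [inv_J]
  ext i j
  fin_cases i <;> fin_cases j <;> simp

/-- The reflection symmetry of the AKNS system: if `μ` solves the system with
potentials `(q, r)` and parameter `k`, then `μ̌(x) = J μ(-x) J⁻¹`, `J = [[0,-1],[1,0]]`,
solves it with potentials `(r(-·), q(-·))` and the same `k`; moreover, for real `k`,
the normalization at `+∞` for `μ` becomes the normalization at `-∞` for `μ̌`. -/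
theorem akns_reflection_symmetry
    (q r : ℝ → ℂ) (k : ℂ)
    (μ : ℝ → Matrix (Fin 2) (Fin 2) ℂ)
    (hμ : ∀ x i j, HasDerivAt (fun y => μ y i j)
      ((!![-Complex.I * k, q x; r x, Complex.I * k] * μ x) i j) x) :
    (∀ x i j, HasDerivAt
      (fun y => ((!![0, -1; 1, 0] : Matrix (Fin 2) (Fin 2) ℂ) * μ (-y) *
        (!![0, -1; 1, 0] : Matrix (Fin 2) (Fin 2) ℂ)⁻¹) i j)
      ((!![-Complex.I * k, r (-x); q (-x), Complex.I * k] *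
        ((!![0, -1; 1, 0] : Matrix (Fin 2) (Fin 2) ℂ) * μ (-x) *
          (!![0, -1; 1, 0] : Matrix (Fin 2) (Fin 2) ℂ)⁻¹)) i j) x) ∧
    (k.im = 0 →
      (∀ i j, Tendsto (fun x : ℝ =>
        (μ x * !![Complex.exp (Complex.I * k * x), 0;
                  0, Complex.exp (-(Complex.I * k * x))]) i j)
        atTop (𝓝 ((1 : Matrix (Fin 2) (Fin 2) ℂ) i j))) →
      (∀ i j, Tendsto (fun x : ℝ =>
        (((!![0, -1; 1, 0] : Matrix (Fin 2) (Fin 2) ℂ) * μ (-x) *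
          (!![0, -1; 1, 0] : Matrix (Fin 2) (Fin 2) ℂ)⁻¹) *
          !![Complex.exp (Complex.I * k * x), 0;
             0, Complex.exp (-(Complex.I * k * x))]) i j)
        atBot (𝓝 ((1 : Matrix (Fin 2) (Fin 2) ℂ) i j)))) := by
  refine ⟨fun x i j => ?_, fun _ hlim => ?_⟩
  · have hreflected : ∀ i j, HasDerivAt (fun y => μ (-y) i j)
        ((-(!![-I * k, q (-x); r (-x), I * k] * μ (-x))) i j) x :=
      fun i j => (hμ (-x) i j).comp_neg
    have hconj : 𝕁 * -(!![-I * k, q (-x); r (-x), I * k] * μ (-x)) * 𝕁⁻¹ =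
        -(𝕁 * !![-I * k, q (-x); r (-x), I * k] * 𝕁⁻¹) * (𝕁 * μ (-x) * 𝕁⁻¹) := by
      simp only [Matrix.mul_assoc, inv_J_mul_J_mul, Matrix.mul_neg, Matrix.neg_mul]
    rw [J_mul_aknsMatrix_mul_inv_J, neg_neg] at hconj
    exact hconj ▸ hasDerivAt_matrix_mul_mul_apply 𝕁 𝕁⁻¹ hreflected i j
  · have hreflected : Tendsto
        (fun x : ℝ => μ (-x) * !![exp (I * k * ↑(-x)), 0; 0, exp (-(I * k * ↑(-x)))])
        atBot (𝓝 1) :=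
      (tendsto_matrix_nhds.mpr hlim).comp tendsto_neg_atBot_atTop
    have hconjugated := (hreflected.const_mul 𝕁).mul_const 𝕁⁻¹
    refine tendsto_matrix_nhds.mp ?_
    convert hconjugated using 2 with x
    · simp only [Matrix.mul_assoc, inv_J_mul_diagonal, ofReal_neg, mul_neg, neg_neg]
    · rw [Matrix.mul_one, inv_J, Matrix.mul_neg, J_mul_J, neg_neg]
end

section
/- Fix ν > 0, α ∈ ℝ, and j ∈ ℤ, and for ω ∈ ℂ \ {iν, -iν} set R_{j,α}(ω) = e^{i α ω} · (((ω − iν)/(ω + iν))^j − 1) (integer power, zpow for negative j). Then for every ω ∈ ℂ \ {iν, -iν}, the complex derivative of R_{j,α} at ω satisfies R_{j,α}'(ω) = (i/ν) · ( −(j/2) · R_{j+1,α}(ω) + (j + α ν) · R_{j,α}(ω) − (j/2) · R_{j−1,α}(ω) ). -/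
/-- The oscillatory rational basis function `R_{j,α}`. -/
noncomputable def oscR (ν α : ℝ) (j : ℤ) (ω : ℂ) : ℂ :=
  Complex.exp (Complex.I * (α : ℂ) * ω) *
    (((ω - Complex.I * (ν : ℂ)) / (ω + Complex.I * (ν : ℂ))) ^ j - 1)

/-! Writing `g = (ω - iν)/(ω + iν)`, one has `g' = (g - 1)² / (2iν)`, so the derivative of `g ^ j`
is `j g^(j-1) (g - 1)² / (2iν)`; and `g^(j-1) (g - 1)²` is the second difference
`g^(j+1) - 2 g^j + g^(j-1)` in `j`, which produces the tridiagonal combination. -/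

open Complex

theorem zpow_pred_mul_sub_one_sq {K : Type*} [Field K] {g : K} (hg : g ≠ 0) (j : ℤ) :
    g ^ (j - 1) * (g - 1) ^ 2 = (g ^ (j + 1) - 1) - 2 * (g ^ j - 1) + (g ^ (j - 1) - 1) := by
  have hj : g ^ j = g ^ (j - 1) * g := by rw [← zpow_add_one₀ hg, sub_add_cancel]
  have hj' : g ^ (j + 1) = g ^ (j - 1) * g * g := by rw [zpow_add_one₀ hg, hj]
  rw [hj, hj']
  ring

theorem hasDerivAt_sub_div_add {c z : ℂ} (hc : c ≠ 0) (hz : z + c ≠ 0) :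
    HasDerivAt (fun z => (z - c) / (z + c)) (((z - c) / (z + c) - 1) ^ 2 / (2 * c)) z := by
  refine (((hasDerivAt_id' z).sub_const c).div ((hasDerivAt_id' z).add_const c) hz).congr_deriv ?_
  field_simp
  ring

/-- Tridiagonal differentiation identity for the oscillatory rational basis:
`R_{j,α}' = (i/ν)·(−(j/2) R_{j+1,α} + (j + αν) R_{j,α} − (j/2) R_{j−1,α})`. -/
theorem oscR_hasDerivAt (ν : ℝ) (hν : 0 < ν) (α : ℝ) (j : ℤ) :
    ∀ ω : ℂ, ω ≠ Complex.I * (ν : ℂ) → ω ≠ -(Complex.I * (ν : ℂ)) →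
      HasDerivAt (oscR ν α j)
        ((Complex.I / (ν : ℂ)) *
          (-((j : ℂ) / 2) * oscR ν α (j + 1) ω + ((j : ℂ) + (α : ℂ) * (ν : ℂ)) * oscR ν α j ω
            - ((j : ℂ) / 2) * oscR ν α (j - 1) ω)) ω := by
  intro ω hω₁ hω₂
  have hν₀ : (ν : ℂ) ≠ 0 := ofReal_ne_zero.mpr hν.ne'
  have hc : I * ν ≠ 0 := mul_ne_zero I_ne_zero hν₀
  have hden : ω + I * ν ≠ 0 := fun h => hω₂ (eq_neg_of_add_eq_zero_left h)
  have hg : (ω - I * ν) / (ω + I * ν) ≠ 0 := div_ne_zero (sub_ne_zero.mpr hω₁) hden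
  have hexp : HasDerivAt (fun z => exp (I * α * z)) (I * α * exp (I * α * ω)) ω := by
    simpa [mul_comm] using ((hasDerivAt_id ω).const_mul (I * α)).cexp
  have hpow :=
    ((hasDerivAt_zpow j _ (Or.inl hg)).comp ω (hasDerivAt_sub_div_add hc hden)).sub_const 1
  refine (hexp.mul hpow).congr_deriv ?_
  simp only [oscR, Function.comp_apply]
  generalize (ω - I * ν) / (ω + I * ν) = g at hg ⊢
  field_simp
  simp only [I_sq]
  linear_combination (j : ℂ) * zpow_pred_mul_sub_one_sq hg j
end

section
/- Fix ν > 0. For all j, ℓ ∈ ℤ, all α, β ∈ ℝ, and all ω ∈ ℂ \ {iν, -iν}: R_{j,α}(ω) · R_{ℓ,β}(ω) = R_{j+ℓ, α+β}(ω) − R_{j, α+β}(ω) − R_{ℓ, α+β}(ω). -/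
/-!
With `z = (ω - iν)/(ω + iν)` we have `R_{j,α} = e^{iαω} (z^j - 1)`. The exponentials multiply to
`e^{i(α+β)ω}`, and the rational factors obey `(a - 1)(b - 1) = (ab - 1) - (a - 1) - (b - 1)` with
`a = z^j`, `b = z^ℓ`, `ab = z^{j+ℓ}`. The last equation needs `z ≠ 0`, which is where `ω ≠ ±iν`
enters: at `ω = -iν` the junk value of division makes `z = 0`, and `0^1 * 0^(-1) ≠ 0^0`.
-/

theorem div_add_ne_zero_of_ne_of_ne_neg {K : Type*} [Field K] {x c : K} (h₁ : x ≠ c)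
    (h₂ : x ≠ -c) : (x - c) / (x + c) ≠ 0 :=
  div_ne_zero (sub_ne_zero.2 h₁) (mt add_eq_zero_iff_eq_neg.1 h₂)

theorem oscR_mul_general (ν : ℝ) :
    ∀ (j ℓ : ℤ) (α β : ℝ) (ω : ℂ), ω ≠ Complex.I * (ν : ℂ) → ω ≠ -(Complex.I * (ν : ℂ)) →
      oscR ν α j ω * oscR ν β ℓ ω =
        oscR ν (α + β) (j + ℓ) ω - oscR ν (α + β) j ω - oscR ν (α + β) ℓ ω := by
  intro j ℓ α β ω h₁ h₂
  have hexp : Complex.exp (Complex.I * ↑(α + β) * ω) =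
      Complex.exp (Complex.I * α * ω) * Complex.exp (Complex.I * β * ω) := by
    rw [← Complex.exp_add]
    push_cast
    ring_nf
  unfold oscR
  set z := (ω - Complex.I * ν) / (ω + Complex.I * ν)
  have hz : z ≠ 0 := div_add_ne_zero_of_ne_of_ne_neg h₁ h₂
  rw [hexp, zpow_add₀ hz]
  ring

/-- Multiplication identity for the oscillatory rational basis:
`R_{j,α} · R_{ℓ,β} = R_{j+ℓ,α+β} − R_{j,α+β} − R_{ℓ,α+β}`. -/
theorem oscR_mul (ν : ℝ) (hν : 0 < ν) :
    ∀ (j ℓ : ℤ) (α β : ℝ) (ω : ℂ), ω ≠ Complex.I * (ν : ℂ) → ω ≠ -(Complex.I * (ν : ℂ)) →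
      oscR ν α j ω * oscR ν β ℓ ω =
        oscR ν (α + β) (j + ℓ) ω - oscR ν (α + β) j ω - oscR ν (α + β) ℓ ω :=
  oscR_mul_general ν
end

section
/- Fix ν > 0, an integer j ≥ 1, and a real α ≥ 0, and set R_{j,α}(t) = e^{i α t} (((t − iν)/(t + iν))^j − 1) for t ∈ ℝ. Then for every ω ∈ ℂ with Im ω > 0, the function t ↦ R_{j,α}(t)/(t − ω) is Lebesgue integrable on ℝ and (1/(2πi)) · ∫_ℝ R_{j,α}(t)/(t − ω) dt = R_{j,α}(ω); and for every ω ∈ ℂ with Im ω < 0, (1/(2πi)) · ∫_ℝ R_{j,α}(t)/(t − ω) dt = 0. -/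
/-!
On the closed upper half-plane `R_{j,α}` is holomorphic (its only pole is `-iν`) and `O(1/|z|)`,
because `|e^{iαz}| ≤ 1` and `|(z - iν)/(z + iν)| ≤ 1` there. For `Im ω < 0` the integrand
`R(z)/(z - ω)` is therefore holomorphic on the closed upper half-plane and `O(1/|z|²)`; by
Cauchy–Goursat on the rectangles `[-A, A] × [0, A]` its integral over `[-A, A]` is `O(1/A)`, so
the integral over `ℝ` vanishes. For `Im ω > 0`, write `R(z) = F(z) + R(ω)(ω + iν)/(z + iν)` with
`F(ω) = 0`: the difference quotient of `F` at `ω` again integrates to zero, and the remaining term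
`(t - ω)⁻¹(t + iν)⁻¹` has the antiderivative `(log(t - ω) - log(t + iν))/(ω + iν)`, whose limits
at `±∞` differ by `2πi/(ω + iν)`.
-/

open MeasureTheory

open Complex Filter Asymptotics Bornology Set
open scoped Interval Topology Real

theorem norm_pow_sub_one_le {R : Type*} [SeminormedRing R] [NormOneClass R] {w : R}
    (hw : ‖w‖ ≤ 1) (n : ℕ) : ‖w ^ n - 1‖ ≤ n * ‖w - 1‖ := by
  rw [← geom_sum_mul]
  refine (norm_mul_le _ _).trans (mul_le_mul_of_nonneg_right ?_ (norm_nonneg _))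
  calc ‖∑ i ∈ Finset.range n, w ^ i‖ ≤ ∑ i ∈ Finset.range n, ‖w ^ i‖ := norm_sum_le _ _
    _ ≤ ∑ _i ∈ Finset.range n, (1 : ℝ) :=
        Finset.sum_le_sum fun i _ => (norm_pow_le w i).trans (pow_le_one₀ (norm_nonneg w) hw)
    _ = n := by simp

theorem isBigO_inv_sub_inv (ω : ℂ) : (fun z : ℂ => (z - ω)⁻¹) =O[cobounded ℂ] fun z => z⁻¹ :=
  (IsEquivalent.refl.sub_isLittleO (isLittleO_const_id_cobounded ω)).inv.isBigO

noncomputable def coboundedUpperHalfPlane : Filter ℂ := cobounded ℂ ⊓ 𝓟 {z : ℂ | 0 ≤ z.im}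

theorem coboundedUpperHalfPlane_le_cobounded : coboundedUpperHalfPlane ≤ cobounded ℂ :=
  inf_le_left

theorem tendsto_ofReal_coboundedUpperHalfPlane :
    Tendsto ((↑) : ℝ → ℂ) (cobounded ℝ) coboundedUpperHalfPlane :=
  tendsto_inf.2 ⟨RCLike.tendsto_ofReal_cobounded_cobounded ℂ,
    tendsto_principal.2 (Eventually.of_forall fun t => by simp)⟩

theorem exists_bound_of_isBigO_coboundedUpperHalfPlane {g h : ℂ → ℂ}
    (hg : g =O[coboundedUpperHalfPlane] h) :
    ∃ C > 0, ∃ M, ∀ z : ℂ, 0 ≤ z.im → M ≤ ‖z‖ → ‖g z‖ ≤ C * ‖h z‖ := by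
  obtain ⟨C, hC, hCg⟩ := hg.exists_pos
  have := hCg.bound
  rw [coboundedUpperHalfPlane, eventually_inf_principal, ← comap_norm_atTop, eventually_comap,
    eventually_atTop] at this
  obtain ⟨M, hM⟩ := this
  exact ⟨C, hC, M, fun z hz hMz => hM _ hMz z rfl hz⟩

theorem isBigO_div_sub {F : ℂ → ℂ} (hF : F =O[coboundedUpperHalfPlane] fun z => z⁻¹) (ω : ℂ) :
    (fun z => F z / (z - ω)) =O[coboundedUpperHalfPlane] fun z => z⁻¹ ^ 2 := by
  simpa [div_eq_mul_inv, sq] using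
    hF.mul ((isBigO_inv_sub_inv ω).mono coboundedUpperHalfPlane_le_cobounded)

theorem isBigO_inv_sq_inv_one_add_sq :
    (fun t : ℝ => (t : ℂ)⁻¹ ^ 2) =O[cobounded ℝ] fun t => (1 + t ^ 2)⁻¹ := by
  refine IsBigO.of_bound 2 ?_
  filter_upwards [eventually_cobounded_le_norm 1] with t ht
  have ht2 : 1 ≤ t ^ 2 := by simpa using one_le_pow₀ (n := 2) ht
  rw [norm_pow, norm_inv, norm_real, inv_pow, Real.norm_eq_abs, sq_abs,
    Real.norm_of_nonneg (by positivity)]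
  calc (t ^ 2)⁻¹ = 2 * (2 * t ^ 2)⁻¹ := by field_simp
    _ ≤ 2 * (1 + t ^ 2)⁻¹ := by gcongr; linarith

theorem integrable_of_isBigO_inv_sq {g : ℂ → ℂ} (hc : Continuous fun t : ℝ => g t)
    (hg : g =O[coboundedUpperHalfPlane] fun z => z⁻¹ ^ 2) : Integrable fun t : ℝ => g t := by
  refine hc.locallyIntegrable.integrable_of_isBigO_cocompact ?_
    (integrable_inv_one_add_sq.integrableAtFilter _)
  rw [← Metric.cobounded_eq_cocompact]
  exact (hg.comp_tendsto tendsto_ofReal_coboundedUpperHalfPlane).trans isBigO_inv_sq_inv_one_add_sq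

theorem norm_intervalIntegral_le_of_rect {g : ℂ → ℂ} {A B : ℝ} (hA : 0 ≤ A)
    (hd : DifferentiableOn ℂ g ([[-A, A]] ×ℂ [[0, A]]))
    (hB : ∀ z : ℂ, 0 ≤ z.im → A ≤ ‖z‖ → ‖g z‖ ≤ B) :
    ‖∫ t in -A..A, g t‖ ≤ 4 * A * B := by
  have h := integral_boundary_rect_eq_zero_of_differentiableOn g (-A) (A + A * I)
    (by simpa using hd)
  simp only [neg_im, ofReal_im, neg_zero, ofReal_zero, zero_mul, add_zero, neg_re, ofReal_re, add_re,
    mul_re, I_re, mul_zero, I_im, mul_one, sub_self, add_im, mul_im, zero_add, smul_eq_mul,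
    ofReal_neg] at h
  have hside : ∀ s : ℝ, |s| = A → ‖∫ y in (0 : ℝ)..A, g (s + y * I)‖ ≤ B * A := fun s hs => by
    have := intervalIntegral.norm_integral_le_of_norm_le_const (a := 0) (b := A)
      fun y hy => hB (s + y * I) (by simpa using (Set.uIoc_of_le hA ▸ hy).1.le)
        (by simpa [hs] using abs_re_le_norm (s + y * I))
    rwa [sub_zero, abs_of_nonneg hA] at this
  have htop : ‖∫ x in -A..A, g (x + A * I)‖ ≤ B * (2 * A) := by
    have := intervalIntegral.norm_integral_le_of_norm_le_const (a := -A) (b := A)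
      fun x _ => hB (x + A * I) (by simpa using hA)
        (by simpa [abs_of_nonneg hA] using abs_im_le_norm (x + A * I))
    rwa [sub_neg_eq_add, ← two_mul, abs_of_nonneg (by positivity)] at this
  rw [show (∫ t in -A..A, g t) = (∫ x in -A..A, g (x + A * I))
      - I * (∫ y in (0 : ℝ)..A, g (A + y * I)) + I * ∫ y in (0 : ℝ)..A, g (-A + y * I) by
    linear_combination h]
  have hleft := hside (-A) (by simp [abs_of_nonneg hA])
  push_cast at hleft
  calc _ ≤ ‖∫ x in -A..A, g (x + A * I)‖ + ‖∫ y in (0 : ℝ)..A, g (A + y * I)‖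
        + ‖∫ y in (0 : ℝ)..A, g (-A + y * I)‖ := by
        refine (norm_add_le _ _).trans (add_le_add ((norm_sub_le _ _).trans ?_) ?_) <;>
          simp
    _ ≤ B * (2 * A) + B * A + B * A := by
        gcongr
        exact hside A (abs_of_nonneg hA)
    _ = 4 * A * B := by ring

theorem integral_eq_zero_of_isBigO_inv_sq {g : ℂ → ℂ}
    (hd : DifferentiableOn ℂ g {z : ℂ | 0 ≤ z.im})
    (hg : g =O[coboundedUpperHalfPlane] fun z => z⁻¹ ^ 2) : ∫ t : ℝ, g t = 0 := by
  have hint := integrable_of_isBigO_inv_sq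
    (hd.continuousOn.comp_continuous continuous_ofReal fun t => by simp) hg
  obtain ⟨C, hC, M, hM⟩ := exists_bound_of_isBigO_coboundedUpperHalfPlane hg
  have hbound : ∀ A ≥ max M 1, ‖∫ t in -A..A, g t‖ ≤ 4 * C / A := fun A hA => by
    have hA1 : 1 ≤ A := le_of_max_le_right hA
    have hA0 : 0 < A := by linarith
    refine (norm_intervalIntegral_le_of_rect (B := C / A ^ 2) hA0.le (hd.mono ?_)
      fun z hz hAz => ?_).trans_eq (by field_simp)
    · intro z hz
      rw [mem_reProdIm, uIcc_of_le hA0.le] at hz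
      exact hz.2.1
    · calc ‖g z‖ ≤ C * ‖z⁻¹ ^ 2‖ := hM z hz ((le_of_max_le_left hA).trans hAz)
        _ = C / ‖z‖ ^ 2 := by rw [norm_pow, norm_inv, inv_pow, div_eq_mul_inv]
        _ ≤ C / A ^ 2 := by gcongr
  refine tendsto_nhds_unique
    (intervalIntegral_tendsto_integral hint tendsto_neg_atTop_atBot tendsto_id) ?_
  refine squeeze_zero_norm' (eventually_ge_atTop (max M 1) |>.mono hbound) ?_
  simpa using tendsto_const_nhds.div_atTop tendsto_id

theorem ofReal_sub_ne_zero {c : ℂ} (hc : c.im ≠ 0) (t : ℝ) : (t : ℂ) - c ≠ 0 :=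
  fun h => hc (by simpa using congrArg im h)

theorem hasDerivAt_log_ofReal_sub {c : ℂ} (hc : c.im ≠ 0) (t : ℝ) :
    HasDerivAt (fun s : ℝ => log (s - c)) (t - c)⁻¹ t := by
  simpa using (((hasDerivAt_id (t : ℂ)).sub_const c).clog
    (Or.inr (by simpa using hc))).comp_ofReal

theorem log_ofReal_sub_of_pos {c : ℂ} (hc : c.im ≠ 0) {t : ℝ} (ht : 0 < t) :
    log (t - c) = Real.log t + log (1 - c / t) := by
  have ht' : (t : ℂ) ≠ 0 := ofReal_ne_zero.2 ht.ne'
  have h : (t : ℂ) - c = t * (1 - c / t) := by field_simp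
  rw [h, log_ofReal_mul ht (right_ne_zero_of_mul (h ▸ ofReal_sub_ne_zero hc t))]

theorem log_ofReal_sub_of_neg {c : ℂ} (hc : c.im ≠ 0) {t : ℝ} (ht : t < 0) :
    log (t - c) = Real.log (-t) + log (-1 + c / t) := by
  have ht' : (t : ℂ) ≠ 0 := ofReal_ne_zero.2 ht.ne
  have h : (t : ℂ) - c = ((-t : ℝ) : ℂ) * (-1 + c / t) := by push_cast; field_simp; ring
  rw [h, log_ofReal_mul (neg_pos.2 ht) (right_ne_zero_of_mul (h ▸ ofReal_sub_ne_zero hc t))]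

theorem tendsto_div_ofReal_cobounded (c : ℂ) :
    Tendsto (fun t : ℝ => c / t) (cobounded ℝ) (𝓝 0) := by
  simpa [div_eq_mul_inv] using
    (tendsto_inv₀_cobounded.comp (RCLike.tendsto_ofReal_cobounded_cobounded ℂ)).const_mul c

theorem tendsto_log_sub_log_atTop {a b : ℂ} (ha : a.im ≠ 0) (hb : b.im ≠ 0) :
    Tendsto (fun t : ℝ => log (t - a) - log (t - b)) atTop (𝓝 0) := by
  have hlog : Tendsto log (𝓝 1) (𝓝 0) := by
    simpa using (continuousAt_clog (by simp : (1 : ℂ) ∈ slitPlane)).tendsto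
  have h1 (c : ℂ) : Tendsto (fun t : ℝ => log (1 - c / t)) atTop (𝓝 0) :=
    hlog.comp (by simpa using tendsto_const_nhds.sub ((tendsto_div_ofReal_cobounded c).mono_left
      IsOrderBornology.atTop_le_cobounded))
  refine (sub_zero (0 : ℂ) ▸ (h1 a).sub (h1 b)).congr' ?_
  filter_upwards [eventually_gt_atTop 0] with t ht
  rw [log_ofReal_sub_of_pos ha ht, log_ofReal_sub_of_pos hb ht]
  ring

theorem tendsto_log_sub_log_atBot {a b : ℂ} (ha : 0 < a.im) (hb : b.im < 0) :
    Tendsto (fun t : ℝ => log (t - a) - log (t - b)) atBot (𝓝 (-(2 * π * I))) := by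
  -- `t - a` and `t - b` approach the negative real axis, where `log` jumps, from opposite sides.
  have hu (c : ℂ) : Tendsto (fun t : ℝ => -1 + c / t) atBot (𝓝 (-1)) := by
    simpa using tendsto_const_nhds.add ((tendsto_div_ofReal_cobounded c).mono_left
      IsOrderBornology.atBot_le_cobounded)
  have hlog_a : Tendsto (fun t : ℝ => log (-1 + a / t)) atBot (𝓝 (-(π * I))) := by
    have := tendsto_log_nhdsWithin_im_neg_of_re_neg_of_im_zero (z := -1) (by simp) (by simp)
    rw [norm_neg, norm_one, Real.log_one, ofReal_zero, zero_sub] at this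
    have hmem : ∀ᶠ t : ℝ in atBot, -1 + a / t ∈ {z : ℂ | z.im < 0} := by
      filter_upwards [eventually_lt_atBot 0] with t ht
      simpa using div_neg_of_pos_of_neg ha ht
    exact this.comp (tendsto_nhdsWithin_iff.2 ⟨hu a, hmem⟩)
  have hlog_b : Tendsto (fun t : ℝ => log (-1 + b / t)) atBot (𝓝 (π * I)) := by
    have := tendsto_log_nhdsWithin_im_nonneg_of_re_neg_of_im_zero (z := -1) (by simp) (by simp)
    rw [norm_neg, norm_one, Real.log_one, ofReal_zero, zero_add] at this
    have hmem : ∀ᶠ t : ℝ in atBot, -1 + b / t ∈ {z : ℂ | 0 ≤ z.im} := by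
      filter_upwards [eventually_lt_atBot 0] with t ht
      simpa using (div_pos_of_neg_of_neg hb ht).le
    exact this.comp (tendsto_nhdsWithin_iff.2 ⟨hu b, hmem⟩)
  rw [show -(2 * π * I) = -(π * I) - π * I by ring]
  refine (hlog_a.sub hlog_b).congr' ?_
  filter_upwards [eventually_lt_atBot 0] with t ht
  rw [log_ofReal_sub_of_neg ha.ne' ht, log_ofReal_sub_of_neg hb.ne ht]
  ring

theorem integrable_inv_sub_mul_inv_sub {a b : ℂ} (ha : a.im ≠ 0) (hb : b.im ≠ 0) :
    Integrable fun t : ℝ => ((t : ℂ) - a)⁻¹ * ((t : ℂ) - b)⁻¹ := by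
  refine integrable_of_isBigO_inv_sq (g := fun z => (z - a)⁻¹ * (z - b)⁻¹) ?_ ?_
  · exact ((continuous_ofReal.sub continuous_const).inv₀ (ofReal_sub_ne_zero ha)).mul
      ((continuous_ofReal.sub continuous_const).inv₀ (ofReal_sub_ne_zero hb))
  · simpa [sq] using ((isBigO_inv_sub_inv a).mul (isBigO_inv_sub_inv b)).mono
      coboundedUpperHalfPlane_le_cobounded

theorem integral_inv_sub_mul_inv_sub {a b : ℂ} (ha : 0 < a.im) (hb : b.im < 0) :
    ∫ t : ℝ, ((t : ℂ) - a)⁻¹ * ((t : ℂ) - b)⁻¹ = 2 * π * I / (a - b) := by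
  have hab : a - b ≠ 0 := fun h => by linarith [congrArg im (sub_eq_zero.1 h)]
  have hderiv (t : ℝ) : HasDerivAt (fun s : ℝ => (a - b)⁻¹ * (log (s - a) - log (s - b)))
      (((t : ℂ) - a)⁻¹ * ((t : ℂ) - b)⁻¹) t := by
    refine (((hasDerivAt_log_ofReal_sub ha.ne' t).sub
      (hasDerivAt_log_ofReal_sub hb.ne t)).const_mul (a - b)⁻¹).congr_deriv ?_
    have := ofReal_sub_ne_zero ha.ne' t
    have := ofReal_sub_ne_zero hb.ne t
    field_simp
    ring
  rw [integral_of_hasDerivAt_of_tendsto hderiv (integrable_inv_sub_mul_inv_sub ha.ne' hb.ne)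
    ((tendsto_log_sub_log_atBot ha hb).const_mul _)
    ((tendsto_log_sub_log_atTop ha.ne' hb.ne).const_mul _)]
  ring

theorem norm_exp_I_mul_le_one {α : ℝ} (hα : 0 ≤ α) {z : ℂ} (hz : 0 ≤ z.im) :
    ‖exp (I * α * z)‖ ≤ 1 := by
  rw [norm_exp, Real.exp_le_one_iff]
  simp only [mul_re, I_re, I_im, ofReal_re, ofReal_im, mul_im]
  nlinarith

theorem norm_sub_I_mul_le_norm_add_I_mul {ν : ℝ} (hν : 0 ≤ ν) {z : ℂ} (hz : 0 ≤ z.im) :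
    ‖z - I * ν‖ ≤ ‖z + I * ν‖ := by
  rw [norm_def, norm_def]
  gcongr
  simp only [normSq_apply, sub_re, sub_im, add_re, add_im, mul_re, mul_im, I_re, I_im,
    ofReal_re, ofReal_im]
  nlinarith [mul_nonneg hν hz]

theorem add_I_mul_ne_zero {ν : ℝ} {z : ℂ} (hz : -ν < z.im) : z + I * ν ≠ 0 := by
  intro h
  have : z.im + ν = 0 := by simpa using congrArg im h
  linarith

theorem norm_oscR_le {ν α : ℝ} (hν : 0 < ν) (hα : 0 ≤ α) (n : ℕ) {z : ℂ} (hz : 0 ≤ z.im) :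
    ‖oscR ν α n z‖ ≤ 2 * n * ν * ‖(z + I * ν)⁻¹‖ := by
  have hden : z + I * ν ≠ 0 := add_I_mul_ne_zero (by linarith)
  set w := (z - I * ν) / (z + I * ν)
  have hw : ‖w‖ ≤ 1 := by
    rw [norm_div, div_le_one (norm_pos_iff.2 hden)]
    exact norm_sub_I_mul_le_norm_add_I_mul hν.le hz
  have hw1 : ‖w - 1‖ = 2 * ν * ‖(z + I * ν)⁻¹‖ := by
    rw [div_sub_one hden, show z - I * ν - (z + I * ν) = -2 * ν * I by ring, div_eq_mul_inv,
      norm_mul, norm_mul, norm_mul, norm_I, norm_neg, norm_real, Real.norm_of_nonneg hν.le]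
    norm_num
  rw [oscR, zpow_natCast, norm_mul]
  calc ‖exp (I * α * z)‖ * ‖w ^ n - 1‖ ≤ 1 * (n * ‖w - 1‖) := by
        gcongr
        exacts [norm_exp_I_mul_le_one hα hz, norm_pow_sub_one_le hw n]
    _ = 2 * n * ν * ‖(z + I * ν)⁻¹‖ := by rw [hw1]; ring

theorem isBigO_oscR {ν α : ℝ} (hν : 0 < ν) (hα : 0 ≤ α) (n : ℕ) :
    oscR ν α n =O[coboundedUpperHalfPlane] fun z => z⁻¹ := by
  have h : oscR ν α n =O[coboundedUpperHalfPlane] fun z => (z + I * ν)⁻¹ :=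
    IsBigO.of_bound _ <| eventually_inf_principal.2 <| Eventually.of_forall fun _ hz =>
      norm_oscR_le hν hα n hz
  have h' : (fun z : ℂ => (z + I * ν)⁻¹) =O[cobounded ℂ] fun z => z⁻¹ := by
    simpa using isBigO_inv_sub_inv (-(I * ν))
  exact h.trans (h'.mono coboundedUpperHalfPlane_le_cobounded)

theorem differentiableAt_oscR {ν : ℝ} (α : ℝ) (n : ℕ) {z : ℂ} (hz : -ν < z.im) :
    DifferentiableAt ℂ (oscR ν α n) z := by
  unfold oscR
  simp only [zpow_natCast]
  fun_prop (disch := exact add_I_mul_ne_zero hz)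

theorem integrable_oscR_div_sub {ν α : ℝ} (hν : 0 < ν) (hα : 0 ≤ α) (n : ℕ) {ω : ℂ}
    (hω : ω.im ≠ 0) : Integrable fun t : ℝ => oscR ν α n t / (t - ω) := by
  refine integrable_of_isBigO_inv_sq (g := fun z => oscR ν α n z / (z - ω))
    (continuous_iff_continuousAt.2 fun t => ?_) (isBigO_div_sub (isBigO_oscR hν hα n) ω)
  exact ((differentiableAt_oscR α n (by simpa using hν)).continuousAt.comp
    continuous_ofReal.continuousAt).div (by fun_prop) (ofReal_sub_ne_zero hω t)

theorem integral_oscR_div_sub_of_im_neg {ν α : ℝ} (hν : 0 < ν) (hα : 0 ≤ α) (n : ℕ) {ω : ℂ}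
    (hω : ω.im < 0) : ∫ t : ℝ, oscR ν α n t / (t - ω) = 0 := by
  refine integral_eq_zero_of_isBigO_inv_sq (g := fun z => oscR ν α n z / (z - ω))
    (fun z (hz : 0 ≤ z.im) => ?_) (isBigO_div_sub (isBigO_oscR hν hα n) ω)
  have hzω : z - ω ≠ 0 := sub_ne_zero.2 fun h => by rw [h] at hz; linarith
  exact ((differentiableAt_oscR α n (by linarith)).div
    (differentiableAt_id.sub_const ω) hzω).differentiableWithinAt

theorem integral_oscR_div_sub_of_im_pos {ν α : ℝ} (hν : 0 < ν) (hα : 0 ≤ α) (n : ℕ) {ω : ℂ}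
    (hω : 0 < ω.im) : ∫ t : ℝ, oscR ν α n t / (t - ω) = 2 * π * I * oscR ν α n ω := by
  have hden : ω + I * ν ≠ 0 := add_I_mul_ne_zero (by linarith)
  set c := oscR ν α n ω * (ω + I * ν)
  -- `c / (z + iν)` agrees with `R` at `ω` and has its only pole at `-iν`, outside `0 ≤ im`.
  set F : ℂ → ℂ := fun z => oscR ν α n z - c * (z - -(I * ν))⁻¹
  have hFω : F ω = 0 := by simp [F, c, hden]
  have hF : F =O[coboundedUpperHalfPlane] fun z => z⁻¹ :=
    (isBigO_oscR hν hα n).sub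
      (((isBigO_inv_sub_inv _).mono coboundedUpperHalfPlane_le_cobounded).const_mul_left c)
  have hdslope : ∀ z ≠ ω, dslope F ω z = F z / (z - ω) := fun z hz => by
    rw [dslope_of_ne F hz, slope_def_field, hFω, sub_zero]
  have hzero : ∫ t : ℝ, dslope F ω t = 0 := by
    refine integral_eq_zero_of_isBigO_inv_sq ?_ ((isBigO_div_sub hF ω).congr' ?_ EventuallyEq.rfl)
    · refine (differentiableOn_dslope
        (continuous_im.continuousAt.preimage_mem_nhds (Ici_mem_nhds hω))).2
          fun z (hz : 0 ≤ z.im) => ?_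
      have hzν : -ν < z.im := by linarith
      have hinv : DifferentiableAt ℂ (fun z => (z - -(I * ν))⁻¹) z :=
        (differentiableAt_id.sub_const _).inv (by simpa using add_I_mul_ne_zero hzν)
      exact ((differentiableAt_oscR α n hzν).sub (hinv.const_mul c)).differentiableWithinAt
    · filter_upwards [(eventually_ne_cobounded ω).filter_mono coboundedUpperHalfPlane_le_cobounded]
        with z hz using (hdslope z hz).symm
  have hνim : (-(I * ν)).im < 0 := by simpa using hν
  have hsplit : (fun t : ℝ => dslope F ω t) = fun t : ℝ =>
      oscR ν α n t / (t - ω) - c * (((t : ℂ) - ω)⁻¹ * ((t : ℂ) - -(I * ν))⁻¹) := funext fun t => by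
    rw [hdslope t fun h => by simpa [← h] using hω.ne]
    ring
  rw [hsplit, integral_sub (integrable_oscR_div_sub hν hα n hω.ne')
    ((integrable_inv_sub_mul_inv_sub hω.ne' hνim.ne).const_mul c), integral_const_mul,
    integral_inv_sub_mul_inv_sub hω hνim, sub_eq_zero] at hzero
  rw [hzero, sub_neg_eq_add]
  field_simp
  exact mul_comm _ _

/-- Cauchy integral of `R_{j,α}` for `j ≥ 1`, `α ≥ 0`: in the upper half-plane the
integrand is integrable and the Cauchy integral reproduces `R_{j,α}(ω)`; in the lower
half-plane the Cauchy integral vanishes. -/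
theorem cauchy_oscR_pos (ν : ℝ) (hν : 0 < ν) (j : ℤ) (hj : 1 ≤ j) (α : ℝ) (hα : 0 ≤ α) :
    (∀ ω : ℂ, 0 < ω.im →
      Integrable (fun t : ℝ => oscR ν α j (t : ℂ) / ((t : ℂ) - ω)) ∧
      (1 / (2 * (Real.pi : ℂ) * Complex.I)) *
        (∫ t : ℝ, oscR ν α j (t : ℂ) / ((t : ℂ) - ω)) = oscR ν α j ω) ∧
    (∀ ω : ℂ, ω.im < 0 →
      (1 / (2 * (Real.pi : ℂ) * Complex.I)) *
        (∫ t : ℝ, oscR ν α j (t : ℂ) / ((t : ℂ) - ω)) = 0) := by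
  lift j to ℕ using by omega
  refine ⟨fun ω hω => ⟨integrable_oscR_div_sub hν hα j hω.ne', ?_⟩, fun ω hω => ?_⟩
  · rw [integral_oscR_div_sub_of_im_pos hν hα j hω]
    field_simp
  · rw [integral_oscR_div_sub_of_im_neg hν hα j hω, mul_zero]
end

section
/- For an integer j ≥ 0, real (or complex) x, and a variable z, define p_j(z, x) = Σ_{n=1}^{j} L_{j−n}^{(n)}(x) · z^n (so p_0 = 0), where L_m^{(n)}(x) = Σ_{k=0}^{m} (−1)^k · binom(m + n, m − k) · x^k / k! and we set L_{−1}^{(1)}(x) := 0. Then for every integer j ≥ 1 and all z, x: p_j(z, x) = (1 + z) · p_{j−1}(z, x) + z · ( L_{j−1}^{(1)}(x) − L_{j−2}^{(1)}(x) ). -/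
/-- The generalized Laguerre polynomial
`L_m^{(n)}(x) = Σ_{k=0}^m (−1)^k binom(m+n, m−k) x^k / k!`. -/
noncomputable def lag (m n : ℕ) (x : ℂ) : ℂ :=
  ∑ k ∈ Finset.range (m + 1),
    (-1 : ℂ) ^ k * ((m + n).choose (m - k) : ℂ) * x ^ k / (Nat.factorial k : ℂ)

/-- `L_m^{(1)}` extended to integer index `m`, with value `0` for `m < 0`. -/
noncomputable def lagOneExt (m : ℤ) (x : ℂ) : ℂ :=
  if 0 ≤ m then lag m.toNat 1 x else 0

/-- `p_j(z,x) = Σ_{n=1}^j L_{j−n}^{(n)}(x) z^n`. -/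
noncomputable def lagP (j : ℕ) (z x : ℂ) : ℂ :=
  ∑ n ∈ Finset.Icc 1 j, lag (j - n) n x * z ^ n

/-!
Write `p_{J+1} = ∑_{m+n=J} L_m^{(n+1)} z^{n+1}` and `q_J = ∑_{m+n=J} L_m^{(n)} z^n`. Splitting off
the term `n = 0` gives `q_J = L_J^{(0)} + p_J`; splitting off `m = 0` and applying the contiguous
relation `L_{m+1}^{(n+1)} = L_{m+1}^{(n)} + L_m^{(n+1)}` termwise gives `p_{J+1} = p_J + z q_J`.
Hence `p_{J+1} = (1 + z) p_J + z L_J^{(0)}`, and `L_J^{(0)} = L_J^{(1)} - L_{J-1}^{(1)}` is the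
contiguous relation once more.
-/

open Finset

lemma lag_zero_left (n : ℕ) (x : ℂ) : lag 0 n x = 1 := by
  simp [lag]

lemma lag_succ_succ (m n : ℕ) (x : ℂ) :
    lag (m + 1) (n + 1) x = lag (m + 1) n x + lag m (n + 1) x := by
  have pascal : ∀ k ∈ range (m + 1), ((m + 1 + (n + 1)).choose (m + 1 - k) : ℂ) =
      (m + 1 + n).choose (m + 1 - k) + (m + (n + 1)).choose (m - k) := by
    intro k hk
    have hk : k ≤ m := Nat.lt_succ_iff.mp (mem_range.mp hk)
    rw [show m + 1 + (n + 1) = (m + n + 1) + 1 by omega, show m + 1 - k = m - k + 1 by omega,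
      Nat.choose_succ_succ', add_comm, Nat.cast_add]
    congr 3; omega
  -- Pascal's rule covers `k ≤ m`; the top terms `k = m + 1` of `lag (m + 1) _` agree.
  simp only [lag, sum_range_succ _ (m + 1), Nat.sub_self, Nat.choose_zero_right]
  rw [sum_congr rfl fun k hk => by rw [pascal k hk]]
  simp only [mul_add, add_mul, add_div, sum_add_distrib]
  ring

lemma lagP_zero (z x : ℂ) : lagP 0 z x = 0 := by
  simp [lagP]

lemma lagP_succ_eq_sum_antidiagonal (J : ℕ) (z x : ℂ) :
    lagP (J + 1) z x = ∑ p ∈ antidiagonal J, lag p.1 (p.2 + 1) x * z ^ (p.2 + 1) := by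
  rw [← Nat.sum_antidiagonal_swap, Nat.sum_antidiagonal_eq_sum_range_succ_mk, range_eq_Ico,
    lagP, ← Ico_add_one_right_eq_Icc, ← zero_add 1, ← sum_Ico_add']
  refine sum_congr rfl fun n hn => ?_
  simp only [Prod.swap_prod_mk]
  congr 2
  have := (mem_Ico.mp hn).2
  omega

noncomputable def lagDiag (J : ℕ) (z x : ℂ) : ℂ :=
  ∑ p ∈ antidiagonal J, lag p.1 p.2 x * z ^ p.2

lemma lagDiag_eq_lag_add_lagP (J : ℕ) (z x : ℂ) : lagDiag J z x = lag J 0 x + lagP J z x := by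
  cases J with
  | zero => simp [lagDiag, lagP_zero]
  | succ J =>
    rw [lagDiag, Nat.sum_antidiagonal_succ', lagP_succ_eq_sum_antidiagonal, pow_zero, mul_one]

lemma lagP_succ_eq_add_mul_lagDiag (J : ℕ) (z x : ℂ) :
    lagP (J + 1) z x = lagP J z x + z * lagDiag J z x := by
  cases J with
  | zero => simp [lagP_succ_eq_sum_antidiagonal, lagP_zero, lagDiag, lag_zero_left]
  | succ J =>
    have shift : z * ∑ p ∈ antidiagonal J, lag (p.1 + 1) p.2 x * z ^ p.2 =
        ∑ p ∈ antidiagonal J, lag (p.1 + 1) p.2 x * z ^ (p.2 + 1) := by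
      rw [mul_sum]
      exact sum_congr rfl fun p _ => by ring
    rw [lagP_succ_eq_sum_antidiagonal, Nat.sum_antidiagonal_succ, lagDiag,
      Nat.sum_antidiagonal_succ, lagP_succ_eq_sum_antidiagonal]
    simp only [lag_succ_succ, add_mul, sum_add_distrib, lag_zero_left]
    rw [mul_add, shift]
    ring

lemma lagOneExt_natCast (m : ℕ) (x : ℂ) : lagOneExt m x = lag m 1 x := by
  simp [lagOneExt]

lemma lag_zero_eq_lagOneExt_sub (m : ℕ) (x : ℂ) :
    lag m 0 x = lagOneExt m x - lagOneExt ((m : ℤ) - 1) x := by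
  cases m with
  | zero => simp [lagOneExt, lag_zero_left]
  | succ m =>
    rw [show ((m + 1 : ℕ) : ℤ) - 1 = m by push_cast; ring, lagOneExt_natCast, lagOneExt_natCast]
    exact eq_sub_of_add_eq (lag_succ_succ m 0 x).symm

/-- The recurrence `p_j = (1+z) p_{j−1} + z (L_{j−1}^{(1)}(x) − L_{j−2}^{(1)}(x))`,
with the convention `L_{−1}^{(1)} = 0`. -/
theorem lagP_recurrence :
    ∀ (j : ℕ), 1 ≤ j → ∀ z x : ℂ,
      lagP j z x = (1 + z) * lagP (j - 1) z x +
        z * (lagOneExt ((j : ℤ) - 1) x - lagOneExt ((j : ℤ) - 2) x) := by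
  intro j hj z x
  obtain ⟨J, rfl⟩ := Nat.exists_eq_add_of_le' hj
  have h1 : ((J + 1 : ℕ) : ℤ) - 1 = J := by push_cast; ring
  have h2 : ((J + 1 : ℕ) : ℤ) - 2 = J - 1 := by push_cast; ring
  rw [lagP_succ_eq_add_mul_lagDiag, lagDiag_eq_lag_add_lagP, lag_zero_eq_lagOneExt_sub,
    Nat.add_sub_cancel, h1, h2]
  ring
end
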